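/- arXiv:1803.01717 — 8 statements merged into one kernel-verified Lean document; each statement's English description precedes it below -/
import Mathlib

section
/- If x is a real element of a finite group G, then there exists a 2-element t ∈ G (an element whose order is a power of 2) such that t⁻¹xt = x⁻¹. -/
/-- An element `x` of a group is *real* if it is conjugate to its inverse. -/
def IsRealEl (G : Type*) [Group G] (x : G) : Prop := ∃ g : G, g⁻¹ * x * g = x⁻¹

/-- The size of the conjugacy class of `x` in `G`. -/
noncomputable def clSize (G : Type*) [Group G] (x : G) : ℕ := Nat.card {y : G // IsConj x y}

lemma conj_pow_aux {G : Type*} [Group G] {g x : G} (h : g⁻¹ * x * g = x⁻¹) :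
    ∀ n : ℕ, (g ^ n)⁻¹ * x * g ^ n = if Even n then x else x⁻¹ := by
  intro n
  induction n with
  | zero => simp
  | succ n ih =>
    have : (g ^ (n + 1))⁻¹ * x * g ^ (n + 1) = g⁻¹ * ((g ^ n)⁻¹ * x * g ^ n) * g := by
      rw [pow_succ]; group
    rw [this, ih]
    rcases Nat.even_or_odd n with he | ho
    · rw [if_pos he, if_neg (by simp [Nat.even_add_one, he])]
      exact h
    · rw [if_neg (Nat.not_even_iff_odd.mpr ho),
        if_pos (by simp [Nat.even_add_one, Nat.not_even_iff_odd.mpr ho])]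
      have : g⁻¹ * x⁻¹ * g = (g⁻¹ * x * g)⁻¹ := by group
      rw [this, h, inv_inv]

theorem stmt_1 {G : Type*} [Group G] [Finite G] (x : G) (hx : IsRealEl G x) :
    ∃ t : G, (∃ k : ℕ, orderOf t = 2 ^ k) ∧ t⁻¹ * x * t = x⁻¹ := by
  obtain ⟨g, hg⟩ := hx
  set n := orderOf g with hn
  have hn0 : n ≠ 0 := (orderOf_pos g).ne'
  set m := n / 2 ^ n.factorization 2 with hm
  have hmodd : Odd m := by
    have := Nat.not_dvd_ordCompl Nat.prime_two hn0
    rwa [Nat.two_dvd_ne_zero, ← Nat.odd_iff] at this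
  have hm0 : m ≠ 0 := hmodd.pos.ne'
  refine ⟨g ^ m, ⟨n.factorization 2, ?_⟩, ?_⟩
  · have hmd : m ∣ n := Nat.ordCompl_dvd n 2
    rw [orderOf_pow' g hm0, ← hn, Nat.gcd_eq_right hmd, hm,
      Nat.div_div_self (Nat.ordProj_dvd n 2) hn0]
  · rw [conj_pow_aux hg m, if_neg (Nat.not_even_iff_odd.mpr hmodd)]
end

section
/- If x is a real element of a finite group G and the size of the conjugacy class of x in G is odd, then x² = 1. -/
theorem stmt_2 {G : Type*} [Group G] [Finite G] (x : G) (hx : IsRealEl G x)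
    (h : Odd (clSize G x)) : x ^ 2 = 1 := by
  classical
  obtain ⟨g, hg⟩ := hx
  have hxinv : IsConj x x⁻¹ := isConj_iff.mpr ⟨g⁻¹, by rw [inv_inv]; exact hg⟩
  have key : ∀ y : G, IsConj x y → IsConj x y⁻¹ := by
    intro y hy
    obtain ⟨c, hc⟩ := isConj_iff.mp hy
    refine hxinv.trans (isConj_iff.mpr ⟨c, ?_⟩)
    rw [← hc]; group
  set S := {y : G // IsConj x y}
  have : Finite S := Subtype.finite
  have : Fintype S := Fintype.ofFinite S
  have hinv : Function.Involutive (fun y : S => (⟨y.1⁻¹, key y.1 y.2⟩ : S)) := by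
    intro y; simp
  set σ : Equiv.Perm S := hinv.toPerm _
  have hσ : σ ^ 2 ^ 1 = 1 := by
    ext y; simp [σ, pow_succ, hinv y]
  have hcard : ¬ (2 ∣ Fintype.card S) := by
    rw [← Nat.card_eq_fintype_card]
    exact fun hd => (Nat.not_even_iff_odd.mpr h) (even_iff_two_dvd.mpr hd)
  haveI : Fact (Nat.Prime 2) := ⟨Nat.prime_two⟩
  obtain ⟨a, ha⟩ := Equiv.Perm.exists_fixed_point_of_prime hcard hσ
  have ha' : a.1⁻¹ = a.1 := congrArg Subtype.val ha
  have ha2 : a.1 ^ 2 = 1 := by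
    rw [pow_two]; nth_rewrite 1 [← ha']; exact inv_mul_cancel _
  obtain ⟨c, hc⟩ := isConj_iff.mp a.2.symm
  calc x ^ 2 = (c * a.1 * c⁻¹) ^ 2 := by rw [hc]
    _ = c * a.1 ^ 2 * c⁻¹ := by rw [pow_two, pow_two]; group
    _ = 1 := by rw [ha2]; group
end

section
/- Let G be a finite group and x, y commuting real elements of G with coprime conjugacy class sizes. Then xy is a real element of G. -/
/-!
If `g` inverts `x` and `h` inverts `y`, then every element of the coset `g C_G(x)` inverts `x` and
every element of `h C_G(y)` inverts `y`. Two left cosets of subgroups of coprime index always meet: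
`C_G(y)` acts on `G / C_G(x)` with orbit of size `|C_G(y) : C_G(x) ∩ C_G(y)| = |G : C_G(x)|`, so
transitively. An element `t` of the intersection inverts both `x` and `y`, hence their product.
-/

open scoped Pointwise

namespace Subgroup

variable {G : Type*} [Group G] {C D : Subgroup G}

theorem relIndex_eq_index_of_coprime_index [C.FiniteIndex] [D.FiniteIndex]
    (hcop : C.index.Coprime D.index) : C.relIndex D = C.index := by
  have hD : 0 < D.index := Nat.pos_of_ne_zero FiniteIndex.index_ne_zero
  have hinf : C.relIndex D * D.index = (C ⊓ D).index := by
    simpa using relIndex_inf_mul_relIndex C D ⊤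
  have hdvd : C.index * D.index ∣ C.relIndex D * D.index :=
    hinf ▸ hcop.mul_dvd_of_dvd_of_dvd (index_dvd_of_le inf_le_left) (index_dvd_of_le inf_le_right)
  refine le_antisymm ?_ (Nat.le_of_dvd ?_ ?_)
  · exact Nat.le_of_mul_le_mul_right (hinf ▸ index_inf_le) hD
  · exact Nat.pos_of_ne_zero (left_ne_zero_of_mul (hinf ▸ FiniteIndex.index_ne_zero))
  · exact Nat.dvd_of_mul_dvd_mul_right hD hdvd

theorem exists_mem_inv_mul_mem_of_relIndex_eq_index [C.FiniteIndex]
    (h : C.relIndex D = C.index) (z : G) : ∃ d ∈ D, d⁻¹ * z ∈ C := by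
  have hsmul (d : D) (a : G) : d • (a : G ⧸ C) = ((d * a : G) : G ⧸ C) := rfl
  have hstab : MulAction.stabilizer D ((1 : G) : G ⧸ C) = C.subgroupOf D := by
    ext d
    simp [hsmul, QuotientGroup.eq, mem_subgroupOf]
  have horbit : MulAction.orbit D ((1 : G) : G ⧸ C) = Set.univ := by
    refine Set.eq_of_subset_of_ncard_le (Set.subset_univ _) ?_
    rw [Set.ncard_univ, ← MulAction.index_stabilizer, hstab, ← relIndex, h, index]
  obtain ⟨d, hd⟩ := horbit.symm ▸ Set.mem_univ (z : G ⧸ C)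
  exact ⟨d, d.2, by simpa [hsmul, QuotientGroup.eq] using hd⟩

theorem leftCoset_inter_nonempty_of_coprime_index [C.FiniteIndex] [D.FiniteIndex]
    (hcop : C.index.Coprime D.index) (g h : G) : (g • (C : Set G) ∩ h • (D : Set G)).Nonempty := by
  obtain ⟨d, hd, hdc⟩ :=
    exists_mem_inv_mul_mem_of_relIndex_eq_index (relIndex_eq_index_of_coprime_index hcop) (h⁻¹ * g)
  refine ⟨h * d, (mem_leftCoset_iff g).2 ?_, (mem_leftCoset_iff h).2 (by simpa using hd)⟩
  simpa [mul_assoc] using C.inv_mem hdc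

end Subgroup

theorem clSize_eq_index_centralizer {G : Type*} [Group G] (x : G) :
    clSize G x = (Subgroup.centralizer {x}).index := by
  have hindex : (Subgroup.centralizer {x}).index = (MulAction.orbit (ConjAct G) x).ncard := by
    rw [Subgroup.centralizer_eq_comap_stabilizer]
    exact (Subgroup.index_comap_of_surjective _ ConjAct.toConjAct.surjective).trans
      (MulAction.index_stabilizer _ x)
  rw [hindex, clSize, ← Nat.card_coe_set_eq]
  exact Nat.card_congr (Equiv.subtypeEquivRight fun y => by
    rw [ConjAct.mem_orbit_conjAct, isConj_comm])

theorem inv_mul_mul_eq_inv_of_mem_leftCoset_centralizer {G : Type*} [Group G] {x g t : G}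
    (hg : g⁻¹ * x * g = x⁻¹) (ht : t ∈ g • (Subgroup.centralizer {x} : Set G)) :
    t⁻¹ * x * t = x⁻¹ := by
  obtain ⟨c, hc, rfl⟩ := ht
  have hcx : Commute c x⁻¹ := Commute.inv_right (Subgroup.mem_centralizer_singleton_iff.1 hc)
  calc (g • c)⁻¹ * x * (g • c) = c⁻¹ * (g⁻¹ * x * g) * c := by simp only [smul_eq_mul]; group
    _ = x⁻¹ := by rw [hg, mul_assoc, ← hcx.eq, inv_mul_cancel_left]

theorem stmt_4 {G : Type*} [Group G] [Finite G] (x y : G) (hx : IsRealEl G x)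
    (hy : IsRealEl G y) (hc : x * y = y * x)
    (hcop : Nat.Coprime (clSize G x) (clSize G y)) : IsRealEl G (x * y) := by
  obtain ⟨g, hg⟩ := hx
  obtain ⟨h, hh⟩ := hy
  rw [clSize_eq_index_centralizer, clSize_eq_index_centralizer] at hcop
  obtain ⟨t, htx, hty⟩ := Subgroup.leftCoset_inter_nonempty_of_coprime_index hcop g h
  refine ⟨t, ?_⟩
  calc t⁻¹ * (x * y) * t = (t⁻¹ * x * t) * (t⁻¹ * y * t) := by group
    _ = (y * x)⁻¹ := by
      rw [inv_mul_mul_eq_inv_of_mem_leftCoset_centralizer hg htx,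
        inv_mul_mul_eq_inv_of_mem_leftCoset_centralizer hh hty, mul_inv_rev]
    _ = (x * y)⁻¹ := by rw [hc]
end

section
/- Let G be a finite group, x, y commuting real elements of G with coprime conjugacy class sizes and coprime orders. Then every prime dividing |x^G| or |y^G| also divides |(xy)^G|. -/
/-!
Since `x` and `y` commute and have coprime orders, each of them is a power of `x * y`. Hence
`C_G(x * y) ≤ C_G(x) ∩ C_G(y)`, so both `|x^G|` and `|y^G|` divide `|(x * y)^G|`.
-/

theorem Commute.exists_pow_mul_eq_left {M : Type*} [Monoid M] {x y : M} (h : Commute x y)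
    (hco : (orderOf x).Coprime (orderOf y)) : ∃ n : ℕ, (x * y) ^ n = x := by
  obtain ⟨m, hm⟩ := exists_pow_eq_self_of_coprime hco.symm
  exact ⟨orderOf y * m, by rw [pow_mul, h.mul_pow, pow_orderOf_eq_one, mul_one, hm]⟩

theorem Commute.exists_pow_mul_eq_right {M : Type*} [Monoid M] {x y : M} (h : Commute x y)
    (hco : (orderOf x).Coprime (orderOf y)) : ∃ n : ℕ, (x * y) ^ n = y :=
  h.eq ▸ h.symm.exists_pow_mul_eq_left hco.symm

section ClassSize

variable {G : Type*} [Group G]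

theorem clSize_eq_index_stabilizer (z : G) :
    clSize G z = (MulAction.stabilizer (ConjAct G) z).index := by
  rw [clSize, MulAction.index_stabilizer, ← Nat.card_coe_set_eq]
  exact Nat.card_congr (Equiv.subtypeEquivRight fun w => by
    rw [ConjAct.mem_orbit_conjAct, isConj_comm])

theorem clSize_dvd_of_pow_eq {z w : G} {n : ℕ} (h : z ^ n = w) : clSize G w ∣ clSize G z := by
  rw [clSize_eq_index_stabilizer, clSize_eq_index_stabilizer]
  refine Subgroup.index_dvd_of_le fun g hg => ?_
  rw [MulAction.mem_stabilizer_iff] at hg ⊢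
  rw [← h, smul_pow', hg]

end ClassSize

theorem stmt_5_general {G : Type*} [Group G] (x y : G) (hc : x * y = y * x)
    (hord : Nat.Coprime (orderOf x) (orderOf y)) :
    ∀ p : ℕ, p.Prime → (p ∣ clSize G x ∨ p ∣ clSize G y) → p ∣ clSize G (x * y) := by
  obtain ⟨m, hm⟩ := Commute.exists_pow_mul_eq_left hc hord
  obtain ⟨n, hn⟩ := Commute.exists_pow_mul_eq_right hc hord
  rintro p - (hp | hp)
  · exact hp.trans (clSize_dvd_of_pow_eq hm)
  · exact hp.trans (clSize_dvd_of_pow_eq hn)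

theorem stmt_5 {G : Type*} [Group G] [Finite G] (x y : G) (hx : IsRealEl G x)
    (hy : IsRealEl G y) (hc : x * y = y * x)
    (hcop : Nat.Coprime (clSize G x) (clSize G y))
    (hord : Nat.Coprime (orderOf x) (orderOf y)) :
    ∀ p : ℕ, p.Prime → (p ∣ clSize G x ∨ p ∣ clSize G y) → p ∣ clSize G (x * y) :=
  stmt_5_general x y hc hord
end

section
/- Let G be a finite group and N a normal subgroup of odd index. Then the set of real elements of G equals the set of real elements of N. -/
lemma conj_pow_real {G : Type*} [Group G] {x g : G} (h : g⁻¹ * x * g = x⁻¹) :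
    ∀ n : ℕ, (g ^ n)⁻¹ * x * g ^ n = if Even n then x else x⁻¹ := by
  intro n
  induction n with
  | zero => simp
  | succ n ih =>
    have : (g ^ (n + 1))⁻¹ * x * g ^ (n + 1) = g⁻¹ * ((g ^ n)⁻¹ * x * g ^ n) * g := by
      rw [pow_succ, mul_inv_rev]; group
    rw [this, ih]
    by_cases he : Even n
    · rw [if_pos he, if_neg (by simp [Nat.even_add_one, he]), h]
    · rw [if_neg he, if_pos (by simp [Nat.even_add_one, he])]
      simpa [mul_assoc] using congrArg Inv.inv h

theorem stmt_6 {G : Type*} [Group G] [Finite G] (N : Subgroup G) [N.Normal]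
    (hodd : Odd N.index) :
    ∀ x : G, IsRealEl G x ↔ (x ∈ N ∧ ∃ g ∈ N, g⁻¹ * x * g = x⁻¹) := by
  intro x
  constructor
  · rintro ⟨g, hg⟩
    set f := QuotientGroup.mk' N with hf
    have hfg : (f g)⁻¹ * f x * f g = (f x)⁻¹ := by
      rw [← map_inv, ← map_inv, ← map_mul, ← map_mul, hg]
    have hcard : Nat.card (G ⧸ N) = N.index := rfl
    have hoddQ : Odd (Nat.card (G ⧸ N)) := hcard ▸ hodd
    have hdvd_odd : ∀ q : G ⧸ N, Odd (orderOf q) := fun q =>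
      hoddQ.of_dvd_nat (orderOf_dvd_natCard q)
    -- order of f g is odd
    set m := orderOf (f g) with hm
    have hmodd : Odd m := hdvd_odd (f g)
    have hmne : ¬ Even m := Nat.not_even_iff_odd.mpr hmodd
    have key := conj_pow_real hfg m
    rw [if_neg hmne, pow_orderOf_eq_one] at key
    simp only [inv_one, one_mul, mul_one] at key
    -- f x = (f x)⁻¹, so (f x)^2 = 1
    have hx2 : (f x) ^ 2 = 1 := by
      rw [pow_two]; nth_rewrite 2 [key]; simp
    have hxdvd : orderOf (f x) ∣ 2 := orderOf_dvd_of_pow_eq_one hx2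
    have hxodd : Odd (orderOf (f x)) := hdvd_odd (f x)
    have hx1 : orderOf (f x) = 1 := by
      rcases (Nat.dvd_prime Nat.prime_two).mp hxdvd with h | h
      · exact h
      · exact absurd hxodd (by norm_num [h])
    have hxN : x ∈ N := by
      rw [← QuotientGroup.eq_one_iff]
      exact orderOf_eq_one_iff.mp hx1
    refine ⟨hxN, g ^ m, ?_, ?_⟩
    · rw [← QuotientGroup.eq_one_iff]
      show f (g ^ m) = 1
      rw [map_pow, pow_orderOf_eq_one]
    · have := conj_pow_real hg m
      rwa [if_neg hmne] at this
  · rintro ⟨-, g, -, hg⟩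
    exact ⟨g, hg⟩
end

section
/- Let G be a finite group with a normal Sylow 2-subgroup. Then every real element of G is a 2-element (i.e., has order a power of 2). -/
/-- In a group, if `q⁻¹ z q = z⁻¹` and `orderOf q` is odd, then `z = z⁻¹`. -/
lemma aux_real_odd {Q : Type*} [Group Q] [Finite Q] (q z : Q)
    (h : q⁻¹ * z * q = z⁻¹) (hodd : ¬ 2 ∣ orderOf q) : z = z⁻¹ := by
  set f : Q → Q := fun w => q⁻¹ * w * q with hf
  have hiter : ∀ n w, f^[n] w = (q ^ n)⁻¹ * w * q ^ n := by
    intro n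
    induction n with
    | zero => simp
    | succ k ih =>
      intro w
      rw [Function.iterate_succ_apply, ih]
      simp only [hf]
      group
  have hinv : f z⁻¹ = z := by
    have h' : q⁻¹ * z⁻¹ * q = (q⁻¹ * z * q)⁻¹ := by group
    simp only [hf, h', h, inv_inv]
  have hff : f^[2] z = z := by
    rw [Function.iterate_succ_apply', Function.iterate_one]
    simp only [hf] at *
    rw [h]
    exact hinv
  set n := orderOf q with hn
  have h2s : 2 * ((n + 1) / 2) = n + 1 := by omega
  have hfix : f^[n + 1] z = z := by
    rw [← h2s, Function.iterate_mul]
    exact Function.iterate_fixed hff _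
  rw [hiter, pow_succ, pow_orderOf_eq_one, one_mul] at hfix
  rw [← h, hfix]

theorem stmt_9 {G : Type*} [Group G] [Finite G]
    (hsyl : ∀ P : Sylow 2 G, (P : Subgroup G).Normal) :
    ∀ x : G, IsRealEl G x → ∃ k : ℕ, orderOf x = 2 ^ k := by
  have : Fact (Nat.Prime 2) := ⟨Nat.prime_two⟩
  obtain ⟨P⟩ : Nonempty (Sylow 2 G) := inferInstance
  haveI hPn : (P : Subgroup G).Normal := hsyl P
  rintro x ⟨g, hg⟩
  set v := (orderOf x).factorization 2 with hv
  set y := x ^ (2 ^ v) with hy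
  have hxpos : 0 < orderOf x := orderOf_pos x
  have hdvd : 2 ^ v ∣ orderOf x := Nat.ordProj_dvd _ 2
  have hyord : orderOf y ∣ orderOf x / 2 ^ v := by
    apply orderOf_dvd_of_pow_eq_one
    rw [hy, ← pow_mul, Nat.mul_div_cancel' hdvd, pow_orderOf_eq_one]
  have hyodd : ¬ 2 ∣ orderOf y := by
    intro h
    exact Nat.not_dvd_ordCompl Nat.prime_two hxpos.ne' (h.trans hyord)
  -- conjugation
  have hgy : g⁻¹ * y * g = y⁻¹ := by
    have hc : g⁻¹ * x * (g⁻¹)⁻¹ = x⁻¹ := by rw [inv_inv]; exact hg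
    have h2 : (g⁻¹ * x * (g⁻¹)⁻¹) ^ (2 ^ v) = g⁻¹ * x ^ (2 ^ v) * (g⁻¹)⁻¹ := conj_pow
    rw [hc, inv_pow, inv_inv] at h2
    rw [hy, ← h2]
  -- pass to quotient
  set Q := G ⧸ (P : Subgroup G) with hQ
  set π : G →* Q := QuotientGroup.mk' (P : Subgroup G) with hπ
  have hzreal : (π g)⁻¹ * π y * π g = (π y)⁻¹ := by
    rw [← map_inv, ← map_mul, ← map_mul, hgy, map_inv]
  have hcardQ : ¬ 2 ∣ Nat.card Q := P.not_dvd_index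
  have hqodd : ¬ 2 ∣ orderOf (π g) := fun h => hcardQ (h.trans (orderOf_dvd_natCard _))
  have hz := aux_real_odd (π g) (π y) hzreal hqodd
  have hzodd : ¬ 2 ∣ orderOf (π y) := fun h => hyodd (h.trans (orderOf_map_dvd π y))
  have hz1 : y ∈ (P : Subgroup G) := by
    rw [← QuotientGroup.eq_one_iff]
    have h2 : (π y) ^ 2 = 1 := by
      rw [pow_two]; nth_rewrite 2 [hz]; exact mul_inv_cancel _
    have hd := orderOf_dvd_of_pow_eq_one h2
    rcases (Nat.dvd_prime Nat.prime_two).mp hd with h1 | h1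
    · exact orderOf_eq_one_iff.mp h1
    · exfalso; apply hzodd; rw [h1]
  -- y is in a 2-group and has odd order, hence y = 1
  obtain ⟨k, hk⟩ := P.2 ⟨y, hz1⟩
  have hyk : y ^ (2 ^ k) = 1 := by
    have := congrArg (Subtype.val) hk
    push_cast at this
    simpa using this
  have hy1 : y = 1 := by
    have hd := orderOf_dvd_of_pow_eq_one hyk
    obtain ⟨j, hj, hje⟩ := (Nat.dvd_prime_pow Nat.prime_two).mp hd
    rcases Nat.eq_zero_or_pos j with rfl | hjpos
    · simpa [pow_zero, orderOf_eq_one_iff] using hje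
    · exact absurd (hje ▸ dvd_pow_self 2 hjpos.ne') hyodd
  have hxo : orderOf x ∣ 2 ^ v := orderOf_dvd_of_pow_eq_one (hy ▸ hy1)
  obtain ⟨j, _, hje⟩ := (Nat.dvd_prime_pow Nat.prime_two).mp hxo
  exact ⟨j, hje⟩
end

section
/- Let G be a finite group and N ⊴ G a normal subgroup of odd order. If the coset Nx is a real element of G/N, then Nx = Ny for some real element y of G. -/
theorem Equiv.Perm.exists_odd_pow_apply_eq_self {α : Type*} (hα : Odd (Nat.card α))
    (σ : Equiv.Perm α) : ∃ m, Odd m ∧ ∃ a, (σ ^ m) a = a := by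
  have : Finite α := Nat.finite_of_card_ne_zero hα.pos.ne'
  have := Fintype.ofFinite α
  have hσ : orderOf σ ≠ 0 := (orderOf_pos σ).ne'
  refine ⟨ordCompl[2] (orderOf σ), ?_, exists_fixed_point_of_prime (p := 2)
    (n := (orderOf σ).factorization 2) ?_ ?_⟩
  · exact Nat.odd_iff.mpr (Nat.two_dvd_ne_zero.mp (Nat.not_dvd_ordCompl Nat.prime_two hσ))
  · rwa [← Nat.card_eq_fintype_card, ← even_iff_two_dvd, Nat.not_even_iff_odd]
  · rw [← pow_mul, mul_comm, Nat.ordProj_mul_ordCompl_eq_self, pow_orderOf_eq_one]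

section

variable {G : Type*} [Group G]

theorem inv_conj_inv_eq_iff {g y z : G} : g⁻¹ * y⁻¹ * g = z ↔ g⁻¹ * y * g = z⁻¹ := by
  rw [← inv_inj]
  simp only [mul_inv_rev, inv_inv, mul_assoc]

def invConj (g : G) : Equiv.Perm G := (Equiv.inv G).trans (MulAut.conj g⁻¹).toEquiv

@[simp]
theorem invConj_apply (g y : G) : invConj g y = g⁻¹ * y⁻¹ * g := by
  simp [invConj]

theorem invConj_pow_apply_of_odd (g y : G) {m : ℕ} (hm : Odd m) :
    (invConj g ^ m) y = (g ^ m)⁻¹ * y⁻¹ * g ^ m := by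
  obtain ⟨j, rfl⟩ := hm
  induction j with
  | zero => simp
  | succ j ih =>
    rw [show 2 * (j + 1) + 1 = 2 + (2 * j + 1) by ring, pow_add, Equiv.Perm.mul_apply, ih]
    simp only [sq, Equiv.Perm.mul_apply, invConj_apply]
    group

theorem map_invConj_eq_iff {H : Type*} [Group H] (f : G →* H) {g x : G}
    (hg : (f g)⁻¹ * f x * f g = (f x)⁻¹) (y : G) :
    f (invConj g y) = f x ↔ f y = f x := by
  have hx : (f g)⁻¹ * (f x)⁻¹ * f g = f x := inv_conj_inv_eq_iff.mpr hg
  rw [invConj_apply, map_mul, map_mul, map_inv, map_inv]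
  nth_rw 1 [← hx]
  simp

theorem exists_isRealEl_map_eq {H : Type*} [Group H] (f : G →* H)
    (hf : Function.Surjective f) (hodd : Odd (Nat.card f.ker)) {x : G}
    (hx : IsRealEl H (f x)) : ∃ y, IsRealEl G y ∧ f y = f x := by
  obtain ⟨h, hh⟩ := hx
  obtain ⟨g, rfl⟩ := hf h
  let σ := (invConj g).subtypePerm (p := fun y => f y = f x) (map_invConj_eq_iff f hh)
  have hfibre : Odd (Nat.card {y // f y = f x}) := Nat.card_congr (f.fiberEquivKer x) ▸ hodd
  obtain ⟨m, hm, y, hy⟩ := σ.exists_odd_pow_apply_eq_self hfibre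
  have hy' : (g ^ m)⁻¹ * (y : G)⁻¹ * g ^ m = y := by
    rw [← invConj_pow_apply_of_odd g _ hm]
    simpa only [σ, Equiv.Perm.subtypePerm_pow, Equiv.Perm.subtypePerm_apply] using
      congrArg Subtype.val hy
  exact ⟨y, ⟨g ^ m, inv_conj_inv_eq_iff.mp hy'⟩, y.2⟩

end

theorem stmt_12_general {G : Type*} [Group G] (N : Subgroup G) [N.Normal]
    (hodd : Odd (Nat.card N)) :
    ∀ x : G, IsRealEl (G ⧸ N) (QuotientGroup.mk x) →
      ∃ y : G, IsRealEl G y ∧ (QuotientGroup.mk y : G ⧸ N) = QuotientGroup.mk x := fun x hx =>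
  exists_isRealEl_map_eq (QuotientGroup.mk' N) (QuotientGroup.mk'_surjective N)
    (by rwa [QuotientGroup.ker_mk']) hx

theorem stmt_12 {G : Type*} [Group G] [Finite G] (N : Subgroup G) [N.Normal]
    (hodd : Odd (Nat.card N)) :
    ∀ x : G, IsRealEl (G ⧸ N) (QuotientGroup.mk x) →
      ∃ y : G, IsRealEl G y ∧ (QuotientGroup.mk y : G ⧸ N) = QuotientGroup.mk x :=
  stmt_12_general N hodd
end

section
/- Let G be a finite group and N ⊴ G of odd order. Then the prime graph on real class sizes of G/N is a subgraph of the prime graph on real class sizes of G: every vertex of Δ*(G/N) is a vertex of Δ*(G), and every edge of Δ*(G/N) is an edge of Δ*(G). -/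
/-- Vertices of the prime graph on real class sizes. -/
def realVerts (G : Type*) [Group G] : Set ℕ :=
  {p | p.Prime ∧ ∃ x : G, IsRealEl G x ∧ p ∣ clSize G x}

/-- Adjacency in the prime graph on real class sizes. -/
def realAdj (G : Type*) [Group G] (p q : ℕ) : Prop :=
  p.Prime ∧ q.Prime ∧ p ≠ q ∧ ∃ x : G, IsRealEl G x ∧ p * q ∣ clSize G x

/-- The prime graph on real class sizes is disconnected. -/
def realDisconnected (G : Type*) [Group G] : Prop :=
  ∃ π₁ π₂ : Set ℕ, π₁.Nonempty ∧ π₂.Nonempty ∧ Disjoint π₁ π₂ ∧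
    π₁ ∪ π₂ = realVerts G ∧ ∀ p ∈ π₁, ∀ q ∈ π₂, ¬ realAdj G p q

open Subgroup MulAction

/-- The conjugacy class size equals the index of the centralizer (stabilizer form). -/
lemma clSize_eq_index {G : Type*} [Group G] (x : G) :
    clSize G x = (stabilizer (ConjAct G) x).index := by
  rw [MulAction.index_stabilizer, ← Nat.card_coe_set_eq]
  exact Nat.card_congr (Equiv.subtypeEquivRight fun y =>
    isConj_comm.trans ConjAct.mem_orbit_conjAct.symm)

/-- Under a surjective homomorphism, the class size of an image divides the class size. -/
lemma clSize_map_dvd {G H : Type*} [Group G] [Group H] (f : G →* H)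
    (hf : Function.Surjective f) (x : G) : clSize H (f x) ∣ clSize G x := by
  rw [clSize_eq_index, clSize_eq_index]
  let F : ConjAct G →* ConjAct H :=
    (ConjAct.toConjAct : H ≃* ConjAct H).toMonoidHom.comp
      (f.comp (ConjAct.ofConjAct : ConjAct G ≃* G).toMonoidHom)
  have hFsurj : Function.Surjective F := by
    intro u
    obtain ⟨z, hz⟩ := hf (ConjAct.ofConjAct u)
    exact ⟨ConjAct.toConjAct z, by simp [F, hz]⟩
  have hmap : (stabilizer (ConjAct G) x).map F ≤ stabilizer (ConjAct H) (f x) := by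
    rintro _ ⟨u, hu, rfl⟩
    have hu' : ConjAct.ofConjAct u * x * (ConjAct.ofConjAct u)⁻¹ = x := hu
    have : f (ConjAct.ofConjAct u) * f x * (f (ConjAct.ofConjAct u))⁻¹ = f x := by
      rw [← map_inv, ← map_mul, ← map_mul, hu']
    simpa [F, MulAction.mem_stabilizer_iff, ConjAct.smul_def] using this
  exact dvd_trans (Subgroup.index_dvd_of_le hmap)
    ((stabilizer (ConjAct G) x).index_map_dvd hFsurj)

/-- A bijection of 2-power order on a finite set of odd cardinality has a fixed point. -/
lemma exists_fixed_of_two_pow {α : Type*} [Finite α] (hodd : Odd (Nat.card α))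
    (f : Equiv.Perm α) (k : ℕ) (hf : f ^ (2 ^ k) = 1) : ∃ a : α, f a = a := by
  have hP : IsPGroup 2 (Subgroup.zpowers f) := by
    rintro ⟨u, hu⟩
    refine ⟨k, ?_⟩
    obtain ⟨i, rfl⟩ := hu
    have h1 : (f ^ i) ^ ((2:ℕ) ^ k : ℕ) = 1 := by
      rw [← zpow_natCast (f ^ i), ← zpow_mul, mul_comm, zpow_mul, zpow_natCast, hf, one_zpow]
    exact Subtype.ext (by rw [SubmonoidClass.coe_pow]; exact h1)
  have h2 : ¬ (2 : ℕ) ∣ Nat.card α := by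
    intro h
    exact (Nat.not_even_iff_odd.mpr hodd) (even_iff_two_dvd.mpr h)
  have := hP.nonempty_fixed_point_of_prime_not_dvd_card (p := 2) α h2
  obtain ⟨a, ha⟩ := this
  have := ha ⟨f, Subgroup.mem_zpowers f⟩
  exact ⟨a, this⟩

/-- Conjugation by odd powers of an inverting element still inverts. -/
lemma odd_pow_inverts {H : Type*} [Group H] {x g : H} (h : g⁻¹ * x * g = x⁻¹) :
    ∀ m : ℕ, Odd m → (g ^ m)⁻¹ * x * g ^ m = x⁻¹ := by
  have h2 : (g ^ 2)⁻¹ * x * g ^ 2 = x := by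
    have : g⁻¹ * x⁻¹ * g = x := by
      have h' : (g⁻¹ * x * g)⁻¹ = x := by rw [h, inv_inv]
      simpa [mul_assoc] using h'
    calc (g ^ 2)⁻¹ * x * g ^ 2 = g⁻¹ * (g⁻¹ * x * g) * g := by
          rw [pow_two]; group
      _ = g⁻¹ * x⁻¹ * g := by rw [h]
      _ = x := this
  have heven : ∀ j : ℕ, (g ^ (2 * j))⁻¹ * x * g ^ (2 * j) = x := by
    intro j
    induction j with
    | zero => simp
    | succ j ih =>
        have : g ^ (2 * (j + 1)) = g ^ (2 * j) * g ^ 2 := by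
          rw [← pow_add]; ring_nf
        rw [this]
        calc (g ^ (2 * j) * g ^ 2)⁻¹ * x * (g ^ (2 * j) * g ^ 2)
            = (g ^ 2)⁻¹ * ((g ^ (2 * j))⁻¹ * x * g ^ (2 * j)) * g ^ 2 := by group
          _ = (g ^ 2)⁻¹ * x * g ^ 2 := by rw [ih]
          _ = x := h2
  rintro m ⟨j, rfl⟩
  have hsplit : g ^ (2 * j + 1) = g ^ (2 * j) * g := by rw [pow_add, pow_one]
  rw [hsplit]
  calc (g ^ (2 * j) * g)⁻¹ * x * (g ^ (2 * j) * g)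
      = g⁻¹ * ((g ^ (2 * j))⁻¹ * x * g ^ (2 * j)) * g := by group
    _ = g⁻¹ * x * g := by rw [heven j]
    _ = x⁻¹ := h

/-- Real elements of `G/N`, `N` of odd order, lift to real elements of `G`. -/
lemma real_lift {G : Type*} [Group G] [Finite G] (N : Subgroup G) [N.Normal]
    (hodd : Odd (Nat.card N)) {xb : G ⧸ N} (hx : IsRealEl (G ⧸ N) xb) :
    ∃ y : G, IsRealEl G y ∧ (y : G ⧸ N) = xb := by
  obtain ⟨gb, hgb⟩ := hx
  -- Step 1: a 2-element of G/N inverting xb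
  set n := orderOf gb with hn
  have hn0 : n ≠ 0 := by
    have : 0 < orderOf gb := orderOf_pos gb
    omega
  set m := ordCompl[2] n with hm
  set a := n.factorization 2 with ha
  have hm_odd : Odd m := Nat.odd_iff.mpr (by
    have := Nat.not_dvd_ordCompl Nat.prime_two hn0 (n := n)
    omega)
  have hmn : 2 ^ a * m = n := Nat.ordProj_mul_ordCompl_eq_self n 2
  set s := gb ^ m with hs
  have hs_inv : s⁻¹ * xb * s = xb⁻¹ := odd_pow_inverts hgb m hm_odd
  have hs_pow : s ^ (2 ^ a) = 1 := by
    rw [hs, ← pow_mul, mul_comm, hmn, hn]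
    exact pow_orderOf_eq_one gb
  -- Step 2: lift s to a 2-element g of G
  obtain ⟨g0, hg0⟩ := QuotientGroup.mk_surjective s
  set n0 := orderOf g0 with hn0'
  have hn00 : n0 ≠ 0 := by
    have : 0 < orderOf g0 := orderOf_pos g0
    omega
  set m0 := ordCompl[2] n0 with hm0
  set b := n0.factorization 2 with hb
  have hm0_odd : Odd m0 := Nat.odd_iff.mpr (by
    have := Nat.not_dvd_ordCompl Nat.prime_two hn00 (n := n0)
    omega)
  have hmn0 : 2 ^ b * m0 = n0 := Nat.ordProj_mul_ordCompl_eq_self n0 2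
  have hcop : Nat.Coprime m0 (2 ^ (a + 1)) :=
    Nat.Coprime.pow_right _ (by
      rw [Nat.coprime_two_right]
      exact hm0_odd)
  obtain ⟨k, hk0, hk1⟩ := Nat.chineseRemainder hcop 0 1
  set g := g0 ^ k with hg
  have hm0k : m0 ∣ k := (Nat.modEq_zero_iff_dvd).mp hk0
  have hkmod : k % 2 ^ (a + 1) = 1 := by
    have h1 : (1 : ℕ) % 2 ^ (a + 1) = 1 :=
      Nat.mod_eq_of_lt (Nat.one_lt_two_pow_iff.mpr (Nat.succ_ne_zero a))
    calc k % 2 ^ (a + 1) = 1 % 2 ^ (a + 1) := hk1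
      _ = 1 := h1
  have hgproj : (g : G ⧸ N) = s := by
    have : ((g0 : G ⧸ N)) = s := hg0
    have hmk : (g : G ⧸ N) = s ^ k := by
      rw [hg, QuotientGroup.mk_pow, this]
    rw [hmk]
    have hksplit : k = 2 ^ (a + 1) * (k / 2 ^ (a + 1)) + 1 := by
      conv_lhs => rw [← Nat.div_add_mod k (2 ^ (a + 1))]
      rw [hkmod]
    have hs_pow' : s ^ (2 ^ (a + 1)) = 1 := by rw [pow_succ, pow_mul, hs_pow, one_pow]
    rw [hksplit, pow_add, pow_one, pow_mul, hs_pow', one_pow, one_mul]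
  have hg_pow : g ^ (2 ^ b) = 1 := by
    obtain ⟨c, rfl⟩ := hm0k
    rw [hg, ← pow_mul]
    have : m0 * c * 2 ^ b = n0 * c := by rw [← hmn0]; ring
    rw [this, pow_mul, pow_orderOf_eq_one, one_pow]
  -- Step 3: the fiber over xb, as a set of odd cardinality
  obtain ⟨x0, hx0⟩ := QuotientGroup.mk_surjective xb
  let α := {y : G // (y : G ⧸ N) = xb}
  have e : α ≃ N := by
    refine ⟨fun y => ⟨x0⁻¹ * y.1, ?_⟩, fun u => ⟨x0 * u.1, ?_⟩, ?_, ?_⟩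
    · rw [← QuotientGroup.eq_one_iff, QuotientGroup.mk_mul, QuotientGroup.mk_inv, hx0, y.2,
        inv_mul_cancel]
    · rw [QuotientGroup.mk_mul, hx0, (QuotientGroup.eq_one_iff u.1).mpr u.2, mul_one]
    · intro y; ext; simp
    · intro u; ext; simp
  have hcard : Odd (Nat.card α) := by rwa [Nat.card_congr e]
  -- Step 4: the 2-power order permutation of the fiber
  have hstep : ∀ y : G, (y : G ⧸ N) = xb → ((g⁻¹ * y⁻¹ * g : G) : G ⧸ N) = xb := by
    intro y hy
    have : ((g⁻¹ * y⁻¹ * g : G) : G ⧸ N) = s⁻¹ * xb⁻¹ * s := by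
      rw [QuotientGroup.mk_mul, QuotientGroup.mk_mul, QuotientGroup.mk_inv,
        QuotientGroup.mk_inv, hgproj, hy]
    rw [this]
    have : s⁻¹ * xb⁻¹ * s = (s⁻¹ * xb * s)⁻¹ := by group
    rw [this, hs_inv, inv_inv]
  let f : Equiv.Perm α :=
    { toFun := fun y => ⟨g⁻¹ * y.1⁻¹ * g, hstep y.1 y.2⟩
      invFun := fun y => ⟨g * y.1⁻¹ * g⁻¹, by
        have hcomp : ((g * y.1⁻¹ * g⁻¹ : G) : G ⧸ N) = s * xb⁻¹ * s⁻¹ := by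
          rw [QuotientGroup.mk_mul, QuotientGroup.mk_mul, QuotientGroup.mk_inv,
            QuotientGroup.mk_inv, hgproj, y.2]
        rw [hcomp]
        have h3 : s * (s⁻¹ * xb * s) * s⁻¹ = xb := by group
        rw [hs_inv] at h3
        exact h3⟩
      left_inv := by
        intro y; ext; show g * (g⁻¹ * y.1⁻¹ * g)⁻¹ * g⁻¹ = y.1; group
      right_inv := by
        intro y; ext; show g⁻¹ * (g * y.1⁻¹ * g⁻¹)⁻¹ * g = y.1; group }
  have hf2 : ∀ (j : ℕ) (y : α), ((f ^ (2 * j)) y).1 = (g ^ (2 * j))⁻¹ * y.1 * g ^ (2 * j) := by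
    intro j
    induction j with
    | zero => intro y; simp
    | succ j ih =>
        intro y
        have hsplit : f ^ (2 * (j + 1)) = f ^ (2 * j) * f ^ 2 := by
          rw [← pow_add]; ring_nf
        rw [hsplit]
        have h2app : ∀ z : α, ((f ^ 2) z).1 = (g ^ 2)⁻¹ * z.1 * g ^ 2 := by
          intro z
          have : (f ^ 2) z = f (f z) := by
            rw [pow_two]; rfl
          rw [this]
          show g⁻¹ * (g⁻¹ * z.1⁻¹ * g)⁻¹ * g = (g ^ 2)⁻¹ * z.1 * g ^ 2
          rw [pow_two]; group
        have : (f ^ (2 * j) * f ^ 2) y = (f ^ (2 * j)) ((f ^ 2) y) := rfl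
        rw [this, ih, h2app]
        have hpow : g ^ (2 * (j + 1)) = g ^ 2 * g ^ (2 * j) := by rw [← pow_add]; ring_nf
        rw [hpow]
        group
  have hfpow : f ^ (2 ^ (b + 1)) = 1 := by
    have h1 : (2 : ℕ) ^ (b + 1) = 2 * 2 ^ b := by rw [pow_succ]; ring
    ext y
    show ((f ^ (2 ^ (b + 1))) y).1 = ((1 : Equiv.Perm α) y).1
    rw [h1, hf2 (2 ^ b) y]
    have : g ^ (2 * 2 ^ b) = 1 := by
      rw [mul_comm, pow_mul, hg_pow, one_pow]
    rw [this]
    simp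
  obtain ⟨y, hy⟩ := exists_fixed_of_two_pow hcard f (b + 1) hfpow
  refine ⟨y.1, ⟨g, ?_⟩, y.2⟩
  have hy' : g⁻¹ * y.1⁻¹ * g = y.1 := congrArg Subtype.val hy
  have h'' : (g⁻¹ * y.1⁻¹ * g)⁻¹ = y.1⁻¹ := by rw [hy']
  simpa [mul_assoc] using h''

theorem stmt_15 {G : Type*} [Group G] [Finite G] (N : Subgroup G) [N.Normal]
    (hodd : Odd (Nat.card N)) :
    realVerts (G ⧸ N) ⊆ realVerts G ∧
      ∀ p q : ℕ, realAdj (G ⧸ N) p q → realAdj G p q := by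
  have key : ∀ xb : G ⧸ N, IsRealEl (G ⧸ N) xb →
      ∃ y : G, IsRealEl G y ∧ clSize (G ⧸ N) xb ∣ clSize G y := by
    intro xb hxb
    obtain ⟨y, hyreal, hyproj⟩ := real_lift N hodd hxb
    refine ⟨y, hyreal, ?_⟩
    have := clSize_map_dvd (QuotientGroup.mk' N) (QuotientGroup.mk_surjective) y
    rwa [show (QuotientGroup.mk' N) y = xb from hyproj] at this
  constructor
  · rintro p ⟨hp, xb, hreal, hdvd⟩
    obtain ⟨y, hyreal, hdvd'⟩ := key xb hreal
    exact ⟨hp, y, hyreal, hdvd.trans hdvd'⟩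
  · rintro p q ⟨hp, hq, hpq, xb, hreal, hdvd⟩
    obtain ⟨y, hyreal, hdvd'⟩ := key xb hreal
    exact ⟨hp, hq, hpq, y, hyreal, hdvd.trans hdvd'⟩
end
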